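/- Let U be a finite set and let F be a finite family of subsets of U. For a finite sequence of choices from F, define the coverage value of the sequence as the cardinality of the union of the chosen sets. If the greedy algorithm runs for k steps, at each step choosing a set from F that maximizes the increase in coverage, then the coverage of the greedy solution after k steps is at least (1 - (1-1/k)^k) times the maximum coverage achievable by any k sets from F; in particular it is at least (1 - e^{-1}) times the optimum. -/

import Mathlib

/-!
Let `W` be the union of `k` sets `T i ∈ F`. After `h` greedy steps, the `T i` together cover
`W \ G h`, so one of them adds at least `(#W - #(G h)) / k` new elements to `G h`, and the
greedy choice adds at least as many. Hence the residual `#W - #(G h)` shrinks by a factor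
`1 - 1/k` at each step, and after `k` steps it is at most `(1 - 1/k)^k * #W ≤ e⁻¹ * #W`.
-/

open Finset

namespace Finset

variable {ι U : Type*} [DecidableEq U]

theorem card_biUnion_sdiff_le_sum (s : Finset ι) (T : ι → Finset U) (G : Finset U) :
    #(s.biUnion T \ G) ≤ ∑ i ∈ s, #(T i \ G) := by
  calc #(s.biUnion T \ G) ≤ #(s.biUnion fun i ↦ T i \ G) := by
        refine card_le_card fun x hx ↦ ?_
        simp only [mem_sdiff, mem_biUnion] at hx ⊢
        obtain ⟨⟨i, hi, hxi⟩, hxG⟩ := hx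
        exact ⟨i, hi, hxi, hxG⟩
    _ ≤ ∑ i ∈ s, #(T i \ G) := card_biUnion_le

theorem exists_card_biUnion_sdiff_le_card_mul [Fintype ι] [Nonempty ι]
    (T : ι → Finset U) (G : Finset U) :
    ∃ i, #(univ.biUnion T \ G) ≤ Fintype.card ι * #(T i \ G) := by
  obtain ⟨i, -, hi⟩ := exists_le_of_sum_le (s := univ) (f := fun _ ↦ #(univ.biUnion T \ G))
    (g := fun i ↦ Fintype.card ι * #(T i \ G)) univ_nonempty <| by
      rw [sum_const, card_univ, smul_eq_mul, ← mul_sum]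
      exact Nat.mul_le_mul_left _ (card_biUnion_sdiff_le_sum _ _ _)
  exact ⟨i, hi⟩

end Finset

section Greedy

variable {ι U : Type*} [DecidableEq U]

def IsGreedyChoice (F : Finset (Finset U)) (G S : Finset U) : Prop :=
  S ∈ F ∧ ∀ T ∈ F, #(G ∪ T) ≤ #(G ∪ S)

theorem IsGreedyChoice.card_sub_le [Fintype ι] [Nonempty ι] {F : Finset (Finset U)}
    {G S : Finset U} (hS : IsGreedyChoice F G S) (T : ι → Finset U) (hT : ∀ i, T i ∈ F) :
    (#(univ.biUnion T) : ℝ) - #(G ∪ S) ≤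
      (1 - 1 / Fintype.card ι) * (#(univ.biUnion T) - #G) := by
  obtain ⟨i, hi⟩ := exists_card_biUnion_sdiff_le_card_mul T G
  set W := univ.biUnion T
  set n := Fintype.card ι
  have hn : (0 : ℝ) < n := Nat.cast_pos.2 Fintype.card_pos
  have hgain : #G + #(T i \ G) ≤ #(G ∪ S) := by
    rw [add_comm, card_sdiff_add_card, union_comm]
    exact hS.2 _ (hT i)
  have hcover : #W ≤ n * #(T i \ G) + #G := (card_le_card_sdiff_add_card (t := G)).trans (by omega)
  have hshare : ((#W : ℝ) - #G) / n ≤ #(T i \ G) := by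
    rw [div_le_iff₀ hn, sub_le_iff_le_add, mul_comm]
    exact_mod_cast hcover
  have hgain' : (#G : ℝ) + #(T i \ G) ≤ #(G ∪ S) := by exact_mod_cast hgain
  calc (#W : ℝ) - #(G ∪ S) ≤ (#W - #G) - (#W - #G) / n := by linarith
    _ = (1 - 1 / (n : ℝ)) * (#W - #G) := by ring

end Greedy

theorem greedy_max_coverage_general {U : Type*} [DecidableEq U]
    (F : Finset (Finset U)) (k : ℕ) (hk : 0 < k)
    (G : ℕ → Finset U) (hG0 : G 0 = ∅)
    (hgreedy : ∀ h < k, ∃ S ∈ F, G (h + 1) = G h ∪ S ∧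
      ∀ T ∈ F, (G h ∪ T).card ≤ (G h ∪ S).card)
    (T : Fin k → Finset U) (hT : ∀ i, T i ∈ F) :
    (1 - (1 - 1 / (k : ℝ)) ^ k) * ((Finset.univ.biUnion T).card : ℝ) ≤ ((G k).card : ℝ) ∧
    (1 - Real.exp (-1)) * ((Finset.univ.biUnion T).card : ℝ) ≤ ((G k).card : ℝ) := by
  have : Nonempty (Fin k) := ⟨⟨0, hk⟩⟩
  set W := univ.biUnion T
  have hstep : ∀ h < k, (#W : ℝ) - #(G (h + 1)) ≤ (1 - 1 / (k : ℝ)) * (#W - #(G h)) := by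
    intro h hh
    obtain ⟨S, hSF, hGS, hmax⟩ := hgreedy h hh
    rw [hGS]
    simpa only [Fintype.card_fin] using IsGreedyChoice.card_sub_le ⟨hSF, hmax⟩ T hT
  have hratio : 0 ≤ 1 - 1 / (k : ℝ) :=
    sub_nonneg.2 (div_le_one_of_le₀ (Nat.one_le_cast.2 hk) k.cast_nonneg)
  have hresidual := le_geom (u := fun h ↦ (#W : ℝ) - #(G h)) hratio k hstep
  have hexp : (1 - 1 / (k : ℝ)) ^ k ≤ Real.exp (-1) :=
    Real.one_sub_div_pow_le_exp_neg (Nat.one_le_cast.2 hk)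
  rw [hG0, card_empty, Nat.cast_zero, sub_zero] at hresidual
  have hpow : (1 - 1 / (k : ℝ)) ^ k * #W ≤ Real.exp (-1) * #W :=
    mul_le_mul_of_nonneg_right hexp (Nat.cast_nonneg _)
  constructor <;> linarith

/-- Greedy max-coverage guarantee: the greedy solution after `k` steps covers at least
`(1 - (1-1/k)^k)` (hence at least `1 - e⁻¹`) times the coverage of any `k` sets from `F`. -/
theorem greedy_max_coverage {U : Type*} [Fintype U] [DecidableEq U]
    (F : Finset (Finset U)) (k : ℕ) (hk : 0 < k)
    (G : ℕ → Finset U) (hG0 : G 0 = ∅)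
    (hgreedy : ∀ h < k, ∃ S ∈ F, G (h + 1) = G h ∪ S ∧
      ∀ T ∈ F, (G h ∪ T).card ≤ (G h ∪ S).card)
    (T : Fin k → Finset U) (hT : ∀ i, T i ∈ F) :
    (1 - (1 - 1 / (k : ℝ)) ^ k) * ((Finset.univ.biUnion T).card : ℝ) ≤ ((G k).card : ℝ) ∧
    (1 - Real.exp (-1)) * ((Finset.univ.biUnion T).card : ℝ) ≤ ((G k).card : ℝ) :=
  greedy_max_coverage_general F k hk G hG0 hgreedy T hT
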